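/- Let n < m ≤ N, Φ ∈ ℝ^{N×m} with ΦᵀΦ = I_m, S ∈ ℝ^{N×n} with SᵀS = I_n, M := SᵀΦ with MMᵀ invertible, M⁺ := Mᵀ(MMᵀ)⁻¹, and Z ∈ ℝ^{m×(m−n)} with ZᵀZ = I_{m−n} and MZ = 0. Then for any w ∈ ℝ^n and b ∈ ℝ^N, the function v ↦ ‖ΦM⁺w + ΦZv − b‖² on ℝ^{m−n} has the unique minimizer v* = ZᵀΦᵀb; in particular the minimizer does not depend on w. (Applied pointwise with w = ẏ(t) and b = f(ũ(t)), this yields the kernel ODE ξ̇ = ZᵀΦᵀf(ũ(ξ)), whose right-hand side is independent of the derivative of the observations.) -/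

import Mathlib

open Matrix

/-- A matrix acting on Euclidean space. -/
noncomputable def aV {a b : ℕ} (A : Matrix (Fin a) (Fin b) ℝ)
    (x : EuclideanSpace ℝ (Fin b)) : EuclideanSpace ℝ (Fin a) :=
  Matrix.toEuclideanLin A x

lemma aV_mul {a b c : ℕ} (A : Matrix (Fin a) (Fin b) ℝ) (B : Matrix (Fin b) (Fin c) ℝ)
    (x : EuclideanSpace ℝ (Fin c)) : aV (A * B) x = aV A (aV B x) := by
  simp [aV, Matrix.toEuclideanLin_apply, Matrix.mulVec_mulVec]

lemma aV_inner {a b : ℕ} (A : Matrix (Fin a) (Fin b) ℝ) (x : EuclideanSpace ℝ (Fin b))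
    (y : EuclideanSpace ℝ (Fin a)) : inner ℝ (aV A x) y = (inner ℝ x (aV Aᵀ y) : ℝ) := by
  have h : (Aᵀ : Matrix (Fin b) (Fin a) ℝ) = Aᴴ := by
    ext i j; simp [conjTranspose_apply]
  rw [aV, aV, h, Matrix.toEuclideanLin_conjTranspose_eq_adjoint]
  exact (LinearMap.adjoint_inner_right _ _ _).symm

lemma aV_one {a : ℕ} (x : EuclideanSpace ℝ (Fin a)) : aV 1 x = x := by
  simp [aV, Matrix.toEuclideanLin_apply]

lemma aV_zero {a b : ℕ} (x : EuclideanSpace ℝ (Fin b)) :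
    aV (0 : Matrix (Fin a) (Fin b) ℝ) x = 0 := by
  simp [aV]

lemma aV_sub {a b : ℕ} (A : Matrix (Fin a) (Fin b) ℝ) (x y : EuclideanSpace ℝ (Fin b)) :
    aV A (x - y) = aV A x - aV A y := by
  simp [aV, map_sub]


/-- Theorem 4.1 (kernel ODE): for any `w ∈ ℝⁿ` and `b ∈ ℝᴺ`, the least-squares problem
`min_v ‖ΦM⁺w + ΦZv − b‖²` has the unique minimizer `v* = ZᵀΦᵀb`, which is independent
of `w`. Applied with `w = ẏ(t)` and `b = f(ũ(t))` this yields the kernel ODE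
`ξ̇ = ZᵀΦᵀ f(ũ(ξ))`, whose right-hand side does not involve the derivative of the
observations. -/
theorem kernel_ODE_least_squares (N m n : ℕ) (hnm : n < m) (hmN : m ≤ N)
    (Φ : Matrix (Fin N) (Fin m) ℝ) (S : Matrix (Fin N) (Fin n) ℝ)
    (hΦ : Φᵀ * Φ = 1) (hS : Sᵀ * S = 1)
    (M : Matrix (Fin n) (Fin m) ℝ) (hM : M = Sᵀ * Φ)
    (hMM : IsUnit (M * Mᵀ))
    (Mplus : Matrix (Fin m) (Fin n) ℝ) (hMp : Mplus = Mᵀ * (M * Mᵀ)⁻¹)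
    (Z : Matrix (Fin m) (Fin (m - n)) ℝ) (hZ : Zᵀ * Z = 1) (hMZ : M * Z = 0)
    (w : EuclideanSpace ℝ (Fin n)) (b : EuclideanSpace ℝ (Fin N))
    (vstar : EuclideanSpace ℝ (Fin (m - n))) (hvstar : vstar = aV (Zᵀ * Φᵀ) b) :
    ∀ v : EuclideanSpace ℝ (Fin (m - n)),
      ‖aV (Φ * Mplus) w + aV (Φ * Z) vstar - b‖ ^ 2 ≤
        ‖aV (Φ * Mplus) w + aV (Φ * Z) v - b‖ ^ 2 ∧
      (‖aV (Φ * Mplus) w + aV (Φ * Z) v - b‖ ^ 2 =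
        ‖aV (Φ * Mplus) w + aV (Φ * Z) vstar - b‖ ^ 2 → v = vstar) := by
  set r : EuclideanSpace ℝ (Fin N) := aV (Φ * Mplus) w - b with hrdef
  have hr : ∀ u : EuclideanSpace ℝ (Fin (m - n)),
      aV (Φ * Mplus) w + aV (Φ * Z) u - b = aV (Φ * Z) u + r := by
    intro u; rw [hrdef]; abel
  have hcols : (Φ * Z)ᵀ * (Φ * Z) = 1 := by
    rw [transpose_mul, Matrix.mul_assoc Zᵀ, ← Matrix.mul_assoc Φᵀ, hΦ, Matrix.one_mul, hZ]
  have hinnerLL : ∀ u u' : EuclideanSpace ℝ (Fin (m - n)),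
      inner ℝ (aV (Φ * Z) u) (aV (Φ * Z) u') = (inner ℝ u u' : ℝ) := by
    intro u u'
    rw [aV_inner, ← aV_mul, hcols, aV_one]
  have hperp : Zᵀ * Φᵀ * (Φ * Mplus) = 0 := by
    rw [hMp, Matrix.mul_assoc Zᵀ, ← Matrix.mul_assoc Φᵀ, hΦ, Matrix.one_mul, ← Matrix.mul_assoc Zᵀ,
      ← transpose_mul, hMZ, transpose_zero, Matrix.zero_mul]
  have hLr : ∀ u : EuclideanSpace ℝ (Fin (m - n)),
      inner ℝ (aV (Φ * Z) u) r = -(inner ℝ u vstar : ℝ) := by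
    intro u
    rw [aV_inner, transpose_mul Φ Z, hrdef, aV_sub, ← aV_mul, hperp, aV_zero, zero_sub,
      inner_neg_right, hvstar]
  have key : ∀ u : EuclideanSpace ℝ (Fin (m - n)),
      ‖aV (Φ * Mplus) w + aV (Φ * Z) u - b‖ ^ 2
        = ‖u‖ ^ 2 - 2 * (inner ℝ u vstar : ℝ) + ‖r‖ ^ 2 := by
    intro u
    rw [hr u, norm_add_sq_real, hLr u, ← real_inner_self_eq_norm_sq, hinnerLL,
      real_inner_self_eq_norm_sq]
    ring
  intro v
  have hexp : ‖v - vstar‖ ^ 2 = ‖v‖ ^ 2 - 2 * (inner ℝ v vstar : ℝ) + ‖vstar‖ ^ 2 :=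
    norm_sub_sq_real v vstar
  have hss : (inner ℝ vstar vstar : ℝ) = ‖vstar‖ ^ 2 := real_inner_self_eq_norm_sq vstar
  constructor
  · rw [key v, key vstar]
    nlinarith [sq_nonneg ‖v - vstar‖]
  · intro heq
    rw [key v, key vstar] at heq
    have h0 : ‖v - vstar‖ ^ 2 = 0 := by nlinarith
    have : v - vstar = 0 := by
      rw [← norm_eq_zero]
      exact pow_eq_zero_iff (by norm_num) |>.mp h0
    exact sub_eq_zero.mp this
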